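/- For all n ≥ 0 and t ≥ 1, (F(t−1) − 2) · c(2^t n + 2^{t−1}) = F(t−1) · c(2^t n + 2^{t−1} − 1). -/
import Mathlib

def c (n : Nat) : Nat := ∑ i ∈ Finset.range (n+1), (Nat.choose n i % 2) * 2^i

def F (k : Nat) : Nat := 2^(2^k) + 1

def g (b n : Nat) : Nat := ∑ i ∈ Finset.range (n+1), (Nat.choose n i % 2) * b^i

lemma c_eq_g (n : Nat) : c n = g 2 n := rfl

lemma sub_one_mul_add_one (x : Nat) (hx : 1 ≤ x) : (x - 1) * (x + 1) = x*x - 1 := by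
  obtain ⟨y, rfl⟩ : ∃ y, x = y+1 := ⟨x-1, by omega⟩
  have h1 : (y+1)*(y+1) = y*y + 2*y + 1 := by ring
  have h2 : (y+1-1) * (y+1+1) = y*y + 2*y := by simp; ring
  omega

lemma lucas2 (n k : Nat) :
    Nat.choose n k % 2 = (Nat.choose (n % 2) (k % 2) * Nat.choose (n / 2) (k / 2)) % 2 := by
  have : Fact (Nat.Prime 2) := ⟨Nat.prime_two⟩
  exact Choose.choose_modEq_choose_mod_mul_choose_div_nat

lemma choose_even_even (m i : Nat) : Nat.choose (2*m) (2*i) % 2 = Nat.choose m i % 2 := by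
  rw [lucas2]; simp [Nat.mul_div_cancel_left, Nat.mul_mod_right]

lemma choose_even_odd (m i : Nat) : Nat.choose (2*m) (2*i+1) % 2 = 0 := by
  rw [lucas2]
  have h1 : (2*m) % 2 = 0 := Nat.mul_mod_right 2 m
  have h2 : (2*i+1) % 2 = 1 := by omega
  simp [h1, h2]

lemma choose_odd_even (m i : Nat) : Nat.choose (2*m+1) (2*i) % 2 = Nat.choose m i % 2 := by
  rw [lucas2]
  have h1 : (2*m+1) % 2 = 1 := by omega
  have h2 : (2*i) % 2 = 0 := Nat.mul_mod_right 2 i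
  have h3 : (2*m+1) / 2 = m := by omega
  have h4 : (2*i) / 2 = i := by omega
  simp [h1, h2, h3, h4]

lemma choose_odd_odd (m i : Nat) : Nat.choose (2*m+1) (2*i+1) % 2 = Nat.choose m i % 2 := by
  rw [lucas2]
  have h1 : (2*m+1) % 2 = 1 := by omega
  have h2 : (2*i+1) % 2 = 1 := by omega
  have h3 : (2*m+1) / 2 = m := by omega
  have h4 : (2*i+1) / 2 = i := by omega
  simp [h1, h2, h3, h4]

lemma sum_range_two_mul (f : Nat → Nat) (n : Nat) :
    ∑ i ∈ Finset.range (2*n), f i = ∑ j ∈ Finset.range n, (f (2*j) + f (2*j+1)) := by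
  induction n with
  | zero => simp
  | succ n ih =>
      have h : 2*(n+1) = (2*n+1)+1 := by ring
      rw [h, Finset.sum_range_succ, Finset.sum_range_succ, ih, Finset.sum_range_succ]
      omega

lemma g_even (b m : Nat) : g b (2*m) = g (b^2) m := by
  unfold g
  calc ∑ i ∈ Finset.range (2*m+1), (Nat.choose (2*m) i % 2) * b^i
      = ∑ i ∈ Finset.range (2*(m+1)), (Nat.choose (2*m) i % 2) * b^i := by
        rw [show 2*(m+1) = (2*m+1)+1 from by ring]
        conv_rhs => rw [Finset.sum_range_succ]
        rw [choose_even_odd m m]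
        simp
    _ = ∑ j ∈ Finset.range (m+1), (Nat.choose m j % 2) * (b^2)^j := by
        rw [sum_range_two_mul]
        apply Finset.sum_congr rfl
        intro j _
        rw [choose_even_even, choose_even_odd]
        simp [pow_mul]

lemma g_odd (b m : Nat) : g b (2*m+1) = (1+b) * g (b^2) m := by
  unfold g
  rw [show 2*m+1+1 = 2*(m+1) from by ring, sum_range_two_mul, Finset.mul_sum]
  apply Finset.sum_congr rfl
  intro j _
  rw [choose_odd_even, choose_odd_odd, pow_mul]
  ring

lemma g_zero (b : Nat) : g b 0 = 1 := by simp [g]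

lemma g_add (b : Nat) : ∀ (k r m : Nat), r < 2^k →
    g b (2^k * m + r) = g b (2^k * m) * g b r := by
  intro k
  induction k generalizing b with
  | zero =>
      intro r m hr
      interval_cases r
      simp [g_zero]
  | succ k ih =>
      intro r m hr
      rcases Nat.even_or_odd r with he | ho
      · obtain ⟨r', hr'⟩ : ∃ r', r = 2*r' := by rcases he with ⟨x, hx⟩; exact ⟨x, by omega⟩
        have h1 : 2^(k+1) * m + r = 2 * (2^k * m + r') := by subst hr'; ring
        have h2 : 2^(k+1) * m = 2 * (2^k * m) := by ring
        have hr'' : r' < 2^k := by subst hr'; simp [pow_succ] at hr; omega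
        rw [h1, h2, hr', g_even, g_even, g_even, ih (b^2) r' m hr'']
      · obtain ⟨r', hr'⟩ := ho
        have h1 : 2^(k+1) * m + r = 2 * (2^k * m + r') + 1 := by subst hr'; ring
        have h2 : 2^(k+1) * m = 2 * (2^k * m) := by ring
        have hr'' : r' < 2^k := by subst hr'; simp [pow_succ] at hr; omega
        rw [h1, h2, hr', g_odd, g_even, g_odd, ih (b^2) r' m hr'']
        ring

lemma g_two_pow (b k : Nat) : g b (2^k) = 1 + b^(2^k) := by
  induction k generalizing b with
  | zero => simp [g, Finset.sum_range_succ]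
  | succ k ih =>
      rw [show (2:ℕ)^(k+1) = 2 * 2^k from by ring, g_even, ih, ← pow_mul]

lemma g_two_pow_sub_one (b k : Nat) (hb : 1 ≤ b) :
    g b (2^k - 1) * (b - 1) + 1 = b^(2^k) := by
  induction k generalizing b with
  | zero => simp [g_zero]; omega
  | succ k ih =>
      have h1 : 2^(k+1) - 1 = 2 * (2^k - 1) + 1 := by
        have := Nat.one_le_two_pow (n := k); simp [pow_succ]; omega
      rw [h1, g_odd]
      have hb2 : 1 ≤ b^2 := Nat.one_le_pow _ _ (by omega)
      have ih2 := ih (b^2) hb2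
      have hbb : (1+b)*(b-1) = b^2 - 1 := by
        obtain ⟨y, rfl⟩ : ∃ y, b = y+1 := ⟨b-1, by omega⟩
        have e1 : (1+(y+1))*((y+1)-1) = y*y+2*y := by simp; ring
        have e2 : (y+1)^2 = y*y+2*y+1 := by ring
        omega
      calc (1+b) * g (b^2) (2^k-1) * (b-1) + 1
          = g (b^2) (2^k-1) * ((1+b)*(b-1)) + 1 := by ring_nf
        _ = g (b^2) (2^k-1) * (b^2-1) + 1 := by rw [hbb]
        _ = (b^2)^(2^k) := ih2
        _ = b^(2^(k+1)) := by rw [← pow_mul]; ring_nf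

theorem stmt10 (n t : Nat) (ht : 1 ≤ t) :
    (F (t-1) - 2) * c (2^t * n + 2^(t-1)) = F (t-1) * c (2^t * n + 2^(t-1) - 1) := by
  obtain ⟨k, rfl⟩ : ∃ k, t = k + 1 := ⟨t - 1, by omega⟩
  simp only [Nat.add_sub_cancel]
  have hone : (1:ℕ) ≤ 2^k := Nat.one_le_two_pow
  have h1 : 2^(k+1) * n + 2^k - 1 = 2^(k+1) * n + (2^k - 1) := by omega
  have h2 : (2:ℕ)^k < 2^(k+1) := Nat.pow_lt_pow_right one_lt_two (Nat.lt_succ_self k)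
  have h3 : 2^k - 1 < 2^(k+1) := by omega
  rw [h1, c_eq_g, c_eq_g, g_add 2 (k+1) (2^k) n h2, g_add 2 (k+1) (2^k-1) n h3, g_two_pow]
  have h6 : (2:ℕ) ≤ 2^(2^k) := by
    calc (2:ℕ) = 2^1 := by norm_num
      _ ≤ 2^(2^k) := Nat.pow_le_pow_right (by norm_num) hone
  have h4 : g 2 (2^k - 1) = 2^(2^k) - 1 := by
    have := g_two_pow_sub_one 2 k (by omega)
    simp at this
    omega
  have h5 : F k - 2 = 2^(2^k) - 1 := by simp [F]
  rw [h4, h5, F]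
  set X := (2:ℕ)^(2^k) with hX
  set G := g 2 (2^(k+1)*n) with hG
  have key : (X - 1) * (X + 1) = X*X - 1 := sub_one_mul_add_one X (by omega)
  calc (X - 1) * (G * (1 + X)) = ((X-1)*(X+1)) * G := by ring
    _ = (X*X-1) * G := by rw [key]
    _ = ((X-1)*(X+1)) * G := by rw [key]
    _ = (X + 1) * (G * (X - 1)) := by ring
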